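/- arXiv:1605.07545 — 3 statements merged into one kernel-verified Lean document; each statement's English description precedes it below -/
import Mathlib

section
/- Suppose e^A is a semisimple matrix in SL(4,ℤ) with four distinct real eigenvalues, all positive and none equal to 1, where A is a real 4×4 matrix. Then the group ℤ⁴ ⋊ ℤ, with ℤ acting on ℤ⁴ by powers of e^A, embeds as a discrete cocompact subgroup (lattice) in ℝ⁴ ⋊ ℝ where t acts by exp(tA). -/
open MeasureTheory

variable (A : Matrix (Fin 4) (Fin 4) ℝ)

/-- The one-parameter group `t ↦ exp (t A)` of matrices. -/
noncomputable def expT (t : ℝ) : Matrix (Fin 4) (Fin 4) ℝ :=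
  NormedSpace.exp (t • A)

theorem expT_add (s t : ℝ) : expT A (s + t) = expT A s * expT A t := by
  rw [expT, expT, expT, add_smul]
  exact Matrix.exp_add_of_commute _ _ (((Commute.refl A).smul_left s).smul_right t)

@[simp]
theorem expT_zero : expT A 0 = 1 := by
  rw [expT, zero_smul]
  exact NormedSpace.exp_zero

/-- The semidirect product `ℝ⁴ ⋊ ℝ` where `t ∈ ℝ` acts on `ℝ⁴` by `exp (t A)`,
with multiplication `(v,s)(w,t) = (v + exp(sA) w, s + t)`. -/
def GA (_A : Matrix (Fin 4) (Fin 4) ℝ) : Type :=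
  (Fin 4 → ℝ) × ℝ

namespace GA

noncomputable instance : Mul (GA A) :=
  ⟨fun a b => ((a.1 + (expT A a.2).mulVec b.1 : Fin 4 → ℝ), a.2 + b.2)⟩

instance : One (GA A) := ⟨((0 : Fin 4 → ℝ), (0 : ℝ))⟩

noncomputable instance : Inv (GA A) :=
  ⟨fun a => (-(expT A (-a.2)).mulVec a.1, -a.2)⟩

variable {A}

@[simp] theorem mul_fst (a b : GA A) :
    (a * b).1 = a.1 + (expT A a.2).mulVec b.1 := rfl
@[simp] theorem mul_snd (a b : GA A) : (a * b).2 = a.2 + b.2 := rfl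
@[simp] theorem one_fst : (1 : GA A).1 = 0 := rfl
@[simp] theorem one_snd : (1 : GA A).2 = 0 := rfl
@[simp] theorem inv_fst (a : GA A) : (a⁻¹).1 = -(expT A (-a.2)).mulVec a.1 := rfl
@[simp] theorem inv_snd (a : GA A) : (a⁻¹).2 = -a.2 := rfl

noncomputable instance : Group (GA A) where
  mul_assoc a b c := by
    refine Prod.ext ?_ ?_
    · simp [Matrix.mulVec_add, Matrix.mulVec_mulVec, expT_add, add_assoc]
    · simp [add_assoc]
  one_mul a := by
    refine Prod.ext ?_ ?_ <;> simp
  mul_one a := by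
    refine Prod.ext ?_ ?_ <;> simp
  inv_mul_cancel a := by
    refine Prod.ext ?_ ?_ <;> simp

end GA

instance : TopologicalSpace (GA A) := inferInstanceAs (TopologicalSpace ((Fin 4 → ℝ) × ℝ))

noncomputable instance : MeasurableSpace (GA A) := borel (GA A)

/-! Every integer time `k` acts on `ℝ⁴` by the image of the integer matrix `B ^ k`, so the integer
points `ℤ⁴ × ℤ` are closed under the group law of `ℝ⁴ ⋊ ℝ`, and they are discrete since the
topology is that of `ℝ⁴ × ℝ`. For cocompactness, write `s = t + ⌊s⌋` with
`t = fract s` and `exp (-tA) v = w + ⌊exp (-tA) v⌋`: then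
`(v, s) = (exp (tA) w, t) * (⌊exp (-tA) v⌋, ⌊s⌋)` with `w, t ∈ [0, 1]`, so a compact box
surjects onto the quotient. -/

open Matrix

section
attribute [local instance] Matrix.linftyOpNormedRing Matrix.linftyOpNormedAlgebra

theorem continuous_expT : Continuous (expT A) :=
  NormedSpace.exp_continuous.comp (continuous_id.smul continuous_const)

end

variable {A}

theorem expT_intCast {B : GL (Fin 4) ℤ}
    (hB : (B : Matrix (Fin 4) (Fin 4) ℤ).map (Int.cast : ℤ → ℝ) = NormedSpace.exp A) (k : ℤ) :
    expT A k = ((B ^ k : GL (Fin 4) ℤ) : Matrix (Fin 4) (Fin 4) ℤ).map Int.cast := by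
  let expTInt : Multiplicative ℤ →* Matrix (Fin 4) (Fin 4) ℝ :=
    { toFun := fun k => expT A (k.toAdd : ℝ)
      map_one' := by simp
      map_mul' := fun k l => by simp [expT_add] }
  let castZPow : Multiplicative ℤ →* Matrix (Fin 4) (Fin 4) ℝ :=
    (Int.castRingHom ℝ).mapMatrix.toMonoidHom.comp (Units.coeHom _ |>.comp (zpowersHom _ B))
  have h : expTInt = castZPow := MonoidHom.ext_mint (by simp [expTInt, castZPow, expT, hB])
  exact DFunLike.congr_fun h (Multiplicative.ofAdd k)

theorem expT_intCast_mulVec_intCast {B : GL (Fin 4) ℤ}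
    (hB : (B : Matrix (Fin 4) (Fin 4) ℤ).map (Int.cast : ℤ → ℝ) = NormedSpace.exp A) (k : ℤ)
    (m : Fin 4 → ℤ) :
    expT A k *ᵥ (fun i => (m i : ℝ)) =
      fun i => ((((B ^ k : GL (Fin 4) ℤ) : Matrix (Fin 4) (Fin 4) ℤ) *ᵥ m) i : ℝ) := by
  rw [expT_intCast hB]
  funext i
  exact (RingHom.map_mulVec (Int.castRingHom ℝ) _ m i).symm

section Lattice

variable {B : GL (Fin 4) ℤ}
  (hB : (B : Matrix (Fin 4) (Fin 4) ℤ).map (Int.cast : ℤ → ℝ) = NormedSpace.exp A)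

def latticeSubgroup : Subgroup (GA A) where
  carrier := {g : GA A | (∃ m : Fin 4 → ℤ, g.1 = fun i => (m i : ℝ)) ∧ ∃ k : ℤ, g.2 = (k : ℝ)}
  mul_mem' := by
    rintro a b ⟨⟨m, hm⟩, k, hk⟩ ⟨⟨n, hn⟩, l, hl⟩
    refine ⟨⟨m + ((B ^ k : GL (Fin 4) ℤ) : Matrix (Fin 4) (Fin 4) ℤ) *ᵥ n, ?_⟩, k + l, ?_⟩
    · rw [GA.mul_fst, hm, hk, hn, expT_intCast_mulVec_intCast hB]
      ext i
      simp
    · rw [GA.mul_snd, hk, hl, Int.cast_add]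
  one_mem' := ⟨⟨0, by ext; simp⟩, 0, by simp⟩
  inv_mem' := by
    rintro a ⟨⟨m, hm⟩, k, hk⟩
    refine ⟨⟨-(((B ^ (-k) : GL (Fin 4) ℤ) : Matrix (Fin 4) (Fin 4) ℤ) *ᵥ m), ?_⟩, -k, ?_⟩
    · rw [GA.inv_fst, hm, hk, ← Int.cast_neg, expT_intCast_mulVec_intCast hB]
      ext i
      simp
    · rw [GA.inv_snd, hk, Int.cast_neg]

theorem discreteTopology_latticeSubgroup : DiscreteTopology (latticeSubgroup hB) := by
  let intCast : (Fin 4 → ℤ) × ℤ → (Fin 4 → ℝ) × ℝ :=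
    Prod.map (fun m i => (m i : ℝ)) (Int.cast : ℤ → ℝ)
  have hcast : Topology.IsEmbedding intCast :=
    (Topology.IsEmbedding.piMap fun _ => Int.isClosedEmbedding_coe_real.isEmbedding).prodMap
      Int.isClosedEmbedding_coe_real.isEmbedding
  have hrange : (latticeSubgroup hB : Set (GA A)) = Set.range intCast := by
    ext g
    constructor
    · rintro ⟨⟨m, hm⟩, k, hk⟩
      exact ⟨(m, k), Prod.ext hm.symm hk.symm⟩
    · rintro ⟨⟨m, k⟩, rfl⟩
      exact ⟨⟨m, rfl⟩, k, rfl⟩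
  have := hcast.toHomeomorph.discreteTopology
  -- explicit instance: the topology of `GA A` is the product one only up to unfolding
  exact @Homeomorph.discreteTopology _ _ _ _ this (Homeomorph.setCongr hrange).symm

variable (A) in
def fundamentalBox : Set (GA A) :=
  (fun p : (Fin 4 → ℝ) × ℝ => ((expT A p.2 *ᵥ p.1, p.2) : GA A)) '' Set.Icc 0 1 ×ˢ Set.Icc 0 1

theorem isCompact_fundamentalBox : IsCompact (fundamentalBox A) :=
  (isCompact_Icc.prod isCompact_Icc).image
    ((((continuous_expT A).comp continuous_snd).matrix_mulVec continuous_fst).prodMk continuous_snd)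

theorem exists_mem_fundamentalBox_mul_mem (g : GA A) :
    ∃ k ∈ fundamentalBox A, ∃ h ∈ latticeSubgroup hB, g = k * h := by
  set t := Int.fract g.2
  set x := expT A (-t) *ᵥ g.1
  refine ⟨(expT A t *ᵥ fun i => Int.fract (x i), t),
    ⟨(fun i => Int.fract (x i), t),
      ⟨⟨fun i => Int.fract_nonneg _, fun i => (Int.fract_lt_one _).le⟩,
        Int.fract_nonneg _, (Int.fract_lt_one _).le⟩, rfl⟩,
    (fun i => (⌊x i⌋ : ℝ), (⌊g.2⌋ : ℝ)), ⟨⟨fun i => ⌊x i⌋, rfl⟩, ⌊g.2⌋, rfl⟩, ?_⟩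
  have hx : (fun i => Int.fract (x i)) + (fun i => (⌊x i⌋ : ℝ)) = x := by
    ext i
    exact Int.fract_add_floor (x i)
  refine Prod.ext ?_ (Int.fract_add_floor g.2).symm
  change g.1 = expT A t *ᵥ (fun i => Int.fract (x i)) + expT A t *ᵥ fun i => (⌊x i⌋ : ℝ)
  rw [← mulVec_add, hx, mulVec_mulVec, ← expT_add, add_neg_cancel, expT_zero, one_mulVec]

theorem compactSpace_quotient_latticeSubgroup : CompactSpace (GA A ⧸ latticeSubgroup hB) := by
  have hsurj :
      QuotientGroup.mk '' fundamentalBox A = (Set.univ : Set (GA A ⧸ latticeSubgroup hB)) := by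
    refine Set.eq_univ_of_forall fun q => ?_
    obtain ⟨g, rfl⟩ := QuotientGroup.mk_surjective q
    obtain ⟨k, hk, h, hh, rfl⟩ := exists_mem_fundamentalBox_mul_mem hB g
    exact ⟨k, hk, (QuotientGroup.mk_mul_of_mem k hh).symm⟩
  exact isCompact_univ_iff.mp (hsurj ▸ isCompact_fundamentalBox.image continuous_quotient_mk')

end Lattice

theorem stmt_11_general (A : Matrix (Fin 4) (Fin 4) ℝ)
    (B : Matrix (Fin 4) (Fin 4) ℤ)
    (hB : B.map (Int.cast : ℤ → ℝ) = NormedSpace.exp A)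
    (hdet : B.det = 1) :
    ∃ H : Subgroup (GA A),
      (H : Set (GA A)) =
        {g : GA A | (∃ m : Fin 4 → ℤ, g.1 = fun i => (m i : ℝ)) ∧ ∃ k : ℤ, g.2 = (k : ℝ)} ∧
      DiscreteTopology H ∧ CompactSpace (GA A ⧸ H) := by
  obtain ⟨B, rfl⟩ := (Matrix.isUnit_iff_isUnit_det B).mpr (hdet ▸ isUnit_one)
  exact ⟨latticeSubgroup hB, rfl, discreteTopology_latticeSubgroup hB,
    compactSpace_quotient_latticeSubgroup hB⟩

/-- If `e^A ∈ SL(4,ℤ)` is semisimple with four distinct positive real eigenvalues, none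
equal to `1`, then `ℤ⁴ ⋊ ℤ` (the integer points) is a discrete cocompact subgroup —
a lattice — in `ℝ⁴ ⋊ ℝ`, where `t` acts by `exp (tA)`. -/
theorem stmt_11 (A : Matrix (Fin 4) (Fin 4) ℝ)
    (B : Matrix (Fin 4) (Fin 4) ℤ)
    (hB : B.map (Int.cast : ℤ → ℝ) = NormedSpace.exp A)
    (hdet : B.det = 1)
    (hss : Module.End.IsSemisimple (R := ℝ) (M := Fin 4 → ℝ) (Matrix.mulVecLin (NormedSpace.exp A)))
    (μ : Fin 4 → ℝ) (hinj : Function.Injective μ)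
    (hpos : ∀ i, 0 < μ i) (hne1 : ∀ i, μ i ≠ 1)
    (heig : ∀ i, Module.End.HasEigenvalue (Matrix.mulVecLin (NormedSpace.exp A)) (μ i)) :
    ∃ H : Subgroup (GA A),
      (H : Set (GA A)) =
        {g : GA A | (∃ m : Fin 4 → ℤ, g.1 = fun i => (m i : ℝ)) ∧ ∃ k : ℤ, g.2 = (k : ℝ)} ∧
      DiscreteTopology H ∧ CompactSpace (GA A ⧸ H) :=
  stmt_11_general A B hB hdet
end

section
/- Every real solvable Lie algebra of dimension 5 whose derived series satisfies 𝔤⁽¹⁾ ⊇ a 4-dimensional abelian ideal, and that is nilpotent with lower central series of length 4 (i.e., 𝔤⁴ ≠ 0, 𝔤⁵ = 0 in the lower central series), contains a 4-dimensional abelian ideal on which a generator acts as a single nilpotent Jordan block of size 4. -/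
/-!
Pick `x` outside the codimension-one abelian ideal `I`, so that `L = I ⊕ ℝ x`. Since `I` is
abelian, every bracket with an element of `I` is a bracket with a multiple of `x`, hence the
`(k + 1)`-st term of the lower central series lies in `(ad x) ^ (k + 1) I`. So `𝔤⁴ ≠ 0` yields
`v ∈ I` with `(ad x)³ v ≠ 0`, while `𝔤⁵ = 0` forces `(ad x)⁴ = 0`; the chain
`(ad x)³ v, (ad x)² v, ad x v, v` is then a basis of `I` on which `ad x` is one Jordan block.
-/

open LieAlgebra LieModule Module

namespace Module.End

variable {K V : Type*} [Field K] [AddCommGroup V] [Module K V]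

theorem linearIndependent_pow_apply {f : End K V} {v : V} {n : ℕ}
    (hn : (f ^ (n + 1)) v = 0) (hv : (f ^ n) v ≠ 0) :
    LinearIndependent K fun i : Fin (n + 1) => (f ^ (i : ℕ)) v := by
  induction n generalizing v with
  | zero => simpa [linearIndependent_unique_iff] using hv
  | succ n ih =>
    have htail : LinearIndependent K fun i : Fin (n + 1) => (f ^ (i : ℕ)) (f v) :=
      ih (by rwa [← mul_apply, ← pow_succ]) (by rwa [← mul_apply, ← pow_succ])
    have hcons : (fun i : Fin (n + 2) => (f ^ (i : ℕ)) v) =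
        Fin.cons v fun i : Fin (n + 1) => (f ^ (i : ℕ)) (f v) := by
      ext i
      refine Fin.cases ?_ (fun i => ?_) i
      · simp
      · simp [← mul_apply, ← pow_succ]
    rw [hcons, linearIndependent_finCons]
    refine ⟨htail, fun hmem => hv ?_⟩
    -- `f ^ (n + 1)` kills every vector of the tail, but not `v`
    have hker : Submodule.span K (Set.range fun i : Fin (n + 1) => (f ^ (i : ℕ)) (f v)) ≤
        LinearMap.ker (f ^ (n + 1)) := by
      rw [Submodule.span_le]
      rintro _ ⟨i, rfl⟩
      simp only [SetLike.mem_coe, LinearMap.mem_ker]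
      rw [← mul_apply, ← mul_apply, mul_assoc, ← pow_succ, ← pow_add,
        show n + 1 + (i + 1) = i + (n + 2) by omega, pow_add, mul_apply, hn, map_zero]
    exact hker hmem

end Module.End

theorem LieIdeal.exists_basis_lie_eq_jordan_chain {K L : Type*} [Field K] [LieRing L]
    [LieAlgebra K L] {I : LieIdeal K L} {n : ℕ} (hI : finrank K I = n + 1) {x v : L}
    (hv : v ∈ I) (hn : (ad K L x ^ (n + 1)) v = 0) (hv' : (ad K L x ^ n) v ≠ 0) :
    ∃ b : Basis (Fin (n + 1)) K I,
      ⁅x, (b 0 : L)⁆ = 0 ∧ ∀ i : Fin n, ⁅x, (b i.succ : L)⁆ = b i.castSucc := by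
  set f := ad K L x
  have hmem : ∀ k, (f ^ k) v ∈ I := fun k =>
    End.pow_apply_mem_of_forall_mem k (fun _ => I.lie_mem) v hv
  let w : Fin (n + 1) → I := fun i => ⟨(f ^ (i.rev : ℕ)) v, hmem _⟩
  have hw : LinearIndependent K w := by
    refine LinearIndependent.of_comp I.toSubmodule.subtype ?_
    exact (End.linearIndependent_pow_apply hn hv').comp Fin.rev Fin.rev_injective
  have hlie : ∀ i, ⁅x, (w i : L)⁆ = (f ^ ((i.rev : ℕ) + 1)) v := fun i => by
    rw [pow_succ', End.mul_apply]; rfl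
  refine ⟨basisOfLinearIndependentOfCardEqFinrank hw (by simp [hI]), ?_, fun i => ?_⟩
  · simp only [coe_basisOfLinearIndependentOfCardEqFinrank, hlie]
    simpa using hn
  · simp only [coe_basisOfLinearIndependentOfCardEqFinrank, hlie]
    congr 2
    simp only [Fin.val_rev, Fin.val_succ, Fin.val_castSucc]
    omega

theorem LieIdeal.lowerCentralSeries_le_map_ad_pow {R L : Type*} [CommRing R] [LieRing L]
    [LieAlgebra R L] {I : LieIdeal R L} [IsLieAbelian I] {x : L}
    (hx : I.toSubmodule ⊔ R ∙ x = ⊤) (k : ℕ) :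
    (lowerCentralSeries R L L (k + 1)).toSubmodule ≤ I.toSubmodule.map (ad R L x ^ (k + 1)) := by
  have hdec : ∀ a : L, ∃ i ∈ I, ∃ c : R, a = i + c • x := fun a => by
    obtain ⟨i, hi, _, hy, rfl⟩ := Submodule.mem_sup.mp (hx ▸ Submodule.mem_top : a ∈ _)
    obtain ⟨c, rfl⟩ := Submodule.mem_span_singleton.mp hy
    exact ⟨i, hi, c, rfl⟩
  have hab : ∀ i ∈ I, ∀ j ∈ I, ⁅i, j⁆ = 0 := fun i hi j hj => by
    simpa using congrArg ((↑) : I → L) (trivial_lie_zero I I ⟨i, hi⟩ ⟨j, hj⟩)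
  induction k with
  | zero =>
    rw [LieModule.lowerCentralSeries_succ, LieSubmodule.lieIdeal_oper_eq_linear_span',
      Submodule.span_le]
    rintro _ ⟨a, -, b, -, rfl⟩
    obtain ⟨i, hi, c, rfl⟩ := hdec a
    obtain ⟨j, hj, d, rfl⟩ := hdec b
    refine ⟨c • j - d • i, I.toSubmodule.sub_mem (I.smul_mem c hj) (I.smul_mem d hi), ?_⟩
    simp only [zero_add, pow_one, map_sub, map_smul, ad_apply, add_lie, lie_add, smul_lie,
      lie_smul, lie_self, hab i hi j hj, ← lie_skew x i]
    module
  | succ k ih =>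
    rw [LieModule.lowerCentralSeries_succ, LieSubmodule.lieIdeal_oper_eq_linear_span',
      Submodule.span_le]
    rintro _ ⟨a, -, _, hm, rfl⟩
    obtain ⟨v, hv, rfl⟩ := ih hm
    obtain ⟨i, hi, c, rfl⟩ := hdec a
    have hmem : (ad R L x ^ (k + 1)) v ∈ I :=
      End.pow_apply_mem_of_forall_mem _ (fun _ => I.lie_mem) v hv
    refine ⟨c • v, I.smul_mem c hv, ?_⟩
    rw [map_smul, pow_succ', End.mul_apply, add_lie, hab i hi _ hmem, smul_lie, zero_add,
      ad_apply]

theorem stmt_17_general (L : Type*) [LieRing L] [LieAlgebra ℝ L]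
    (hdim : Module.finrank ℝ L = 5)
    (habelian : ∃ I : LieIdeal ℝ L, IsLieAbelian I ∧ Module.finrank ℝ I = 4)
    (h4 : LieModule.lowerCentralSeries ℝ L L 3 ≠ ⊥)
    (h5 : LieModule.lowerCentralSeries ℝ L L 4 = ⊥) :
    ∃ I : LieIdeal ℝ L, IsLieAbelian I ∧ Module.finrank ℝ I = 4 ∧
      ∃ (x : L) (b : Module.Basis (Fin 4) ℝ I), x ∉ I ∧
        ⁅x, (b 0 : L)⁆ = 0 ∧
        ∀ i : Fin 3, ⁅x, (b i.succ : L)⁆ = (b i.castSucc : L) := by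
  obtain ⟨I, hIab, hI4⟩ := habelian
  have : FiniteDimensional ℝ L := Module.finite_of_finrank_eq_succ hdim
  obtain ⟨x, -, hx⟩ : ∃ x ∈ (⊤ : Submodule ℝ L), x ∉ I.toSubmodule :=
    SetLike.exists_of_lt <| Submodule.lt_top_of_finrank_lt_finrank <| by
      change Module.finrank ℝ I < _
      omega
  have hsup : I.toSubmodule ⊔ ℝ ∙ x = ⊤ :=
    Submodule.eq_top_of_finrank_eq <| by
      rw [Submodule.finrank_sup_span_singleton hx]
      change Module.finrank ℝ I + 1 = _
      omega
  obtain ⟨m, hm, hm0⟩ :=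
    Submodule.exists_mem_ne_zero_of_ne_bot ((LieSubmodule.toSubmodule_eq_bot _).not.mpr h4)
  obtain ⟨v, hv, rfl⟩ := LieIdeal.lowerCentralSeries_le_map_ad_pow hsup 2 hm
  have hv4 : (ad ℝ L x ^ 4) v = 0 := by
    have := iterate_toEnd_mem_lowerCentralSeries ℝ L L x v 4
    rwa [h5, LieSubmodule.mem_bot, ← End.pow_apply] at this
  obtain ⟨b, hb0, hb⟩ := LieIdeal.exists_basis_lie_eq_jordan_chain hI4 hv hv4 hm0
  exact ⟨I, hIab, hI4, x, b, hx, hb0, hb⟩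

/-- A 5-dimensional real nilpotent Lie algebra containing a 4-dimensional abelian ideal,
whose lower central series has length 4 (`𝔤⁴ ≠ 0`, `𝔤⁵ = 0`), contains a 4-dimensional
abelian ideal on which a generator acts as a single nilpotent Jordan block of size 4. -/
theorem stmt_17 (L : Type*) [LieRing L] [LieAlgebra ℝ L]
    (hdim : Module.finrank ℝ L = 5)
    (hsolv : LieAlgebra.IsSolvable L)
    (habelian : ∃ I : LieIdeal ℝ L, IsLieAbelian I ∧ Module.finrank ℝ I = 4)
    (h4 : LieModule.lowerCentralSeries ℝ L L 3 ≠ ⊥)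
    (h5 : LieModule.lowerCentralSeries ℝ L L 4 = ⊥) :
    ∃ I : LieIdeal ℝ L, IsLieAbelian I ∧ Module.finrank ℝ I = 4 ∧
      ∃ (x : L) (b : Module.Basis (Fin 4) ℝ I), x ∉ I ∧
        ⁅x, (b 0 : L)⁆ = 0 ∧
        ∀ i : Fin 3, ⁅x, (b i.succ : L)⁆ = (b i.castSucc : L) :=
  stmt_17_general L hdim habelian h4 h5
end

section
/- Let α be a positive real number and let H_α = {(γ(s), e^{πit}, αs + t) : s, t ∈ ℝ} be the subgroup of G = SL₂~(ℝ) × S³ × ℝ, where γ : ℝ → SL₂~(ℝ) is a one-parameter subgroup projecting to rotations in PSL(2,ℝ) with γ(ℤ) equal to the center's image lattice, and t ↦ e^{πit} is a one-parameter subgroup of S³ = unit quaternions sending ℤ onto the center {±1}. Then H_α is a closed subgroup of G isomorphic to ℝ², and it is normal in γ(ℝ) × S¹ × ℝ. -/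
/-!
`H_α` is the image of the homomorphism `(s, t) ↦ (γ s, e^{πit}, αs + t)` from `ℝ²`. After the
shear `(s, t) ↦ (s, αs + t)` this map becomes the graph of a continuous `S³`-valued function
over the closed embedding `(s, u) ↦ (γ s, u)`, so it is itself a closed embedding: its image
is closed and it is a topological isomorphism onto it. Normality is elementwise commutation,
as `γ(ℝ)`, `S¹` and `ℝ` are abelian.
-/

open Real

/-- The one-parameter subgroup `t ↦ e^{πit} = cos πt + i sin πt` of the group `S³` of
unit quaternions, sending `ℤ` onto the center `{±1}`. -/
noncomputable def epi (t : ℝ) : unitary (Quaternion ℝ) :=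
  ⟨⟨Real.cos (π * t), Real.sin (π * t), 0, 0⟩, by
    have hn : Quaternion.normSq (⟨Real.cos (π * t), Real.sin (π * t), 0, 0⟩ : Quaternion ℝ)
        = 1 := by
      erw [Quaternion.normSq_def']
      simp [Real.cos_sq_add_sin_sq]
    erw [Unitary.mem_iff, Quaternion.star_mul_self, Quaternion.self_mul_star, hn]
    simp⟩

open Topology

lemma commute_of_map_add {R M : Type*} [AddCommMagma R] [Mul M] {f : R → M}
    (hf : ∀ s t, f (s + t) = f s * f t) (a b : R) : Commute (f a) (f b) := by
  rw [Commute, SemiconjBy, ← hf, ← hf, add_comm]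

section Graph

variable {X Y Z : Type*} [TopologicalSpace X] [TopologicalSpace Y] [TopologicalSpace Z]

lemma isClosedEmbedding_graph [T2Space Y] {f : X → Y} (hf : Continuous f) :
    IsClosedEmbedding fun x => (x, f x) := by
  refine ⟨isEmbedding_graph hf, ?_⟩
  convert isClosed_eq continuous_snd (hf.comp continuous_fst)
  ext ⟨x, y⟩
  simp [eq_comm]

lemma Topology.IsClosedEmbedding.prodMk [T2Space Z] {f : X → Y} {g : X → Z}
    (hf : IsClosedEmbedding f) (hg : Continuous g) : IsClosedEmbedding fun x => (f x, g x) :=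
  (hf.prodMap .id).comp (isClosedEmbedding_graph hg)

end Graph

def Homeomorph.shear (α : ℝ) : ℝ × ℝ ≃ₜ ℝ × ℝ where
  toFun x := (x.1, α * x.1 + x.2)
  invFun y := (y.1, y.2 - α * y.1)
  left_inv x := by simp
  right_inv y := by simp
  continuous_toFun := by fun_prop
  continuous_invFun := by fun_prop

section ParamHα

variable {A B : Type*} [Group A] [Group B] {γ : ℝ → A} {ε : ℝ → B}

def paramHα (hγ : ∀ s t, γ (s + t) = γ s * γ t) (hε : ∀ s t, ε (s + t) = ε s * ε t) (α : ℝ) :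
    Multiplicative (ℝ × ℝ) →* A × B × Multiplicative ℝ :=
  MonoidHom.mk' (fun x => (γ x.toAdd.1, ε x.toAdd.2, .ofAdd (α * x.toAdd.1 + x.toAdd.2)))
    fun x y => by
      simp only [toAdd_mul, Prod.fst_add, Prod.snd_add, hγ, hε, Prod.mk_mul_mk, ← ofAdd_add]
      congr 3
      ring

lemma isClosedEmbedding_paramHα [TopologicalSpace A] [TopologicalSpace B] [T2Space B]
    (hγ : ∀ s t, γ (s + t) = γ s * γ t) (hε : ∀ s t, ε (s + t) = ε s * ε t)
    (hγemb : IsClosedEmbedding γ) (hεcont : Continuous ε) (α : ℝ) :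
    IsClosedEmbedding (paramHα hγ hε α) := by
  have hshear : IsClosedEmbedding fun x : ℝ × ℝ => (γ x.1, α * x.1 + x.2) :=
    (hγemb.prodMap .id).comp (Homeomorph.shear α).isClosedEmbedding
  exact ((Homeomorph.prodAssoc A ℝ B).trans
    ((Homeomorph.refl A).prodCongr (Homeomorph.prodComm ℝ B))).isClosedEmbedding.comp
      (hshear.prodMk (hεcont.comp continuous_snd))

end ParamHα

lemma coe_epi (t : ℝ) :
    (epi t : Quaternion ℝ) = Quaternion.ofComplex ⟨Real.cos (π * t), Real.sin (π * t)⟩ := rfl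

lemma epi_add (s t : ℝ) : epi (s + t) = epi s * epi t := by
  ext1
  rw [MulMemClass.coe_mul, coe_epi, coe_epi, coe_epi, ← map_mul]
  congr 1
  apply Complex.ext <;> simp [mul_add, Real.cos_add, Real.sin_add, add_comm]

lemma continuous_epi : Continuous epi :=
  (Quaternion.ofComplex.toLinearMap.continuous_of_finiteDimensional.comp <|
    Complex.equivRealProdCLM.symm.continuous.comp <|
      (by fun_prop : Continuous fun t : ℝ => (Real.cos (π * t), Real.sin (π * t)))).subtype_mk _

theorem stmt_19_general (G₁ : Type*) [Group G₁] [TopologicalSpace G₁]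
    (γ : ℝ → G₁)
    (hγhom : ∀ s t : ℝ, γ (s + t) = γ s * γ t)
    (hγemb : Topology.IsClosedEmbedding γ)
    (α : ℝ) :
    let S : Set (G₁ × unitary (Quaternion ℝ) × Multiplicative ℝ) :=
      {g | ∃ s t : ℝ, g = (γ s, epi t, Multiplicative.ofAdd (α * s + t))}
    (∃ H : Subgroup (G₁ × unitary (Quaternion ℝ) × Multiplicative ℝ),
      (H : Set (G₁ × unitary (Quaternion ℝ) × Multiplicative ℝ)) = S ∧
      IsClosed S ∧
      ∃ e : Multiplicative (ℝ × ℝ) ≃* H, Continuous e ∧ Continuous e.symm) ∧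
    ∀ k ∈ (Set.range γ) ×ˢ (Set.range epi) ×ˢ (Set.univ : Set (Multiplicative ℝ)),
      ∀ h ∈ S, k * h * k⁻¹ ∈ S := by
  intro S
  set φ := paramHα hγhom epi_add α
  have hφ : IsClosedEmbedding φ := isClosedEmbedding_paramHα hγhom epi_add hγemb continuous_epi α
  have hS : Set.range φ = S := by
    ext g
    constructor
    · rintro ⟨x, rfl⟩
      exact ⟨x.toAdd.1, x.toAdd.2, rfl⟩
    · rintro ⟨s, t, rfl⟩
      exact ⟨.ofAdd (s, t), rfl⟩
  refine ⟨⟨φ.range, hS, hS ▸ hφ.isClosed_range, MonoidHom.ofInjective hφ.injective,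
    hφ.continuous.subtype_mk _, ?_⟩, ?_⟩
  · refine hφ.isInducing.continuous_iff.mpr ?_
    simpa only [Function.comp_def, MonoidHom.apply_ofInjective_symm] using continuous_subtype_val
  · rintro ⟨k₁, k₂, k₃⟩ ⟨⟨a, rfl⟩, ⟨b, rfl⟩, -⟩ h ⟨s, t, rfl⟩
    rw [((commute_of_map_add hγhom a s).prod
      ((commute_of_map_add epi_add b t).prod (Commute.all _ _))).mul_inv_cancel]
    exact ⟨s, t, rfl⟩

/-- Let `G₁` play the role of the universal cover of `SL(2,ℝ)`, with
`γ : ℝ → G₁` the one-parameter subgroup lying over the rotations `SO(2)`, a closed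
embedding sending `ℤ` into the center.  For `α > 0`, the subgroup
`H_α = {(γ(s), e^{πit}, αs + t)}` of `G₁ × S³ × ℝ` is closed, isomorphic to `ℝ²`
(as a topological group), and normal in `γ(ℝ) × S¹ × ℝ`. -/
theorem stmt_19 (G₁ : Type*) [Group G₁] [TopologicalSpace G₁] [IsTopologicalGroup G₁]
    (γ : ℝ → G₁)
    (hγhom : ∀ s t : ℝ, γ (s + t) = γ s * γ t)
    (hγemb : Topology.IsClosedEmbedding γ)
    (hγcen : ∀ n : ℤ, γ (n : ℝ) ∈ Subgroup.center G₁)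
    (α : ℝ) (hα : 0 < α) :
    let S : Set (G₁ × unitary (Quaternion ℝ) × Multiplicative ℝ) :=
      {g | ∃ s t : ℝ, g = (γ s, epi t, Multiplicative.ofAdd (α * s + t))}
    (∃ H : Subgroup (G₁ × unitary (Quaternion ℝ) × Multiplicative ℝ),
      (H : Set (G₁ × unitary (Quaternion ℝ) × Multiplicative ℝ)) = S ∧
      IsClosed S ∧
      ∃ e : Multiplicative (ℝ × ℝ) ≃* H, Continuous e ∧ Continuous e.symm) ∧
    ∀ k ∈ (Set.range γ) ×ˢ (Set.range epi) ×ˢ (Set.univ : Set (Multiplicative ℝ)),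
      ∀ h ∈ S, k * h * k⁻¹ ∈ S :=
  stmt_19_general G₁ γ hγhom hγemb α
end
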